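/- arXiv:2003.03949 — 4 statements merged into one kernel-verified Lean document; each statement's English description precedes it below -/
import Mathlib

section
/- Let n ≥ 2 and let Z ⊂ ℝⁿ be a compact set whose (n−1)-dimensional Minkowski content vanishes, i.e. lim_{ε→0⁺} Leb(Z_ε)/(2ε) = 0, where Z_ε := { x ∈ ℝⁿ : dist(x, Z) ≤ ε } and Leb denotes Lebesgue measure. Then there exists a sequence ε_k → 0⁺ such that the (n−1)-dimensional Hausdorff measures of the topological boundaries of the tubular neighborhoods satisfy H^{n−1}(∂Z_{ε_k}) → 0 as k → ∞. -/
open MeasureTheory Metric Filter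
open scoped ENNReal NNReal Topology

set_option maxHeartbeats 1000000

noncomputable section

open Set in
lemma greedy_net {E : Type*} [MetricSpace E] {δ : ℝ} (hδ : 0 < δ) (T : Finset E) :
    ∃ S : Finset E, S ⊆ T ∧ ((S : Set E).Pairwise fun x y => δ ≤ dist x y) ∧
      ∀ z ∈ T, ∃ x ∈ S, dist z x < δ := by
  classical
  induction T using Finset.strongInduction with
  | _ T ih =>
    rcases T.eq_empty_or_nonempty with rfl | ⟨x, hx⟩
    · exact ⟨∅, by simp, by simp, by simp⟩
    · have hss : T.filter (fun y => δ ≤ dist x y) ⊂ T := by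
        refine Finset.filter_ssubset.2 ⟨x, hx, ?_⟩
        simp [hδ.not_ge]
      obtain ⟨S', hS'T, hsep, hcov⟩ := ih _ hss
      have hS'mem : ∀ y ∈ S', δ ≤ dist x y := fun y hy =>
        (Finset.mem_filter.1 (hS'T hy)).2
      refine ⟨insert x S', ?_, ?_, ?_⟩
      · exact Finset.insert_subset hx (hS'T.trans (Finset.filter_subset _ _))
      · intro a ha b hb hab
        simp only [Finset.coe_insert, Set.mem_insert_iff] at ha hb
        rcases ha with rfl | ha
        · rcases hb with rfl | hb
          · exact absurd rfl hab
          · exact hS'mem b hb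
        · rcases hb with rfl | hb
          · rw [dist_comm]; exact hS'mem a ha
          · exact hsep ha hb hab
      · intro z hz
        by_cases h : δ ≤ dist x z
        · obtain ⟨y, hy, hyd⟩ := hcov z (Finset.mem_filter.2 ⟨hz, h⟩)
          exact ⟨y, Finset.mem_insert_of_mem hy, hyd⟩
        · exact ⟨x, Finset.mem_insert_self _ _, by rw [dist_comm]; exact lt_of_not_ge h⟩

section AuxHB
open Set
variable {E : Type*} [NormedAddCommGroup E] [NormedSpace ℝ E] [FiniteDimensional ℝ E]
  [MeasureSpace E] [BorelSpace E] [Nontrivial E]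
  [(volume : Measure E).IsAddHaarMeasure]

lemma hausdorff_bound (Z : Set E)
    (hZne : Z.Nonempty) (hZb : Bornology.IsBounded Z)
    (ρ : Measure ℝ)
    (hρ : ∀ a b : ℝ, 0 ≤ a → a ≤ b →
      volume ({x : E | Metric.infDist x Z ≤ b} \ {x : E | Metric.infDist x Z ≤ a})
        ≤ ρ (Set.Icc a b))
    (ε : ℝ) (hε : 0 < ε) (L : ℝ≥0∞)
    (hlim : Tendsto (fun r => ρ (closedBall ε r) / ENNReal.ofReal (2 * r)) (𝓝[>] (0:ℝ)) (𝓝 L)) :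
    μH[(Module.finrank ℝ E : ℝ) - 1] (frontier {x : E | Metric.infDist x Z ≤ ε}) ≤
      (ENNReal.ofReal ((2:ℝ) ^ (3 * Module.finrank ℝ E)) / volume (ball (0 : E) 1)) * L := by
  haveI : ProperSpace E := FiniteDimensional.proper ℝ E
  set n := Module.finrank ℝ E with hnd
  have hn : 1 ≤ n := Module.finrank_pos
  set Vb := volume (ball (0 : E) 1) with hVb
  have hVb0 : Vb ≠ 0 := (measure_ball_pos volume _ one_pos).ne'
  have hVbt : Vb ≠ ∞ := measure_ball_lt_top.ne
  set C : ℝ≥0∞ := ENNReal.ofReal ((2:ℝ) ^ (3 * n)) / Vb with hC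
  have hCt : C ≠ ∞ := (ENNReal.div_lt_top ENNReal.ofReal_ne_top hVb0).ne
  set T : ℝ → Set E := fun r => {x : E | Metric.infDist x Z ≤ r} with hT
  set Fr := frontier (T ε) with hFr
  have hTcl : ∀ r : ℝ, IsClosed (T r) := fun r =>
    isClosed_le (Metric.continuous_infDist_pt Z) continuous_const
  have hlevel : Fr ⊆ {x : E | Metric.infDist x Z = ε} :=
    frontier_le_subset_eq (f := fun x : E => Metric.infDist x Z)
      (g := fun _ => ε) (Metric.continuous_infDist_pt Z) continuous_const
  have hTb : ∀ r : ℝ, Bornology.IsBounded (T r) := by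
    intro r
    obtain ⟨z₀, hz₀⟩ := id hZne
    obtain ⟨R, hR⟩ := hZb.subset_closedBall z₀
    refine (Metric.isBounded_closedBall (x := z₀) (r := R + (|r| + 1))).subset ?_
    intro x hx
    have h1 : Metric.infDist x Z < |r| + 1 :=
      lt_of_le_of_lt hx (lt_of_le_of_lt (le_abs_self r) (lt_add_one _))
    obtain ⟨z, hzZ, hzd⟩ := (Metric.infDist_lt_iff hZne).1 h1
    have h2 := hR hzZ
    simp only [mem_closedBall] at h2 ⊢
    calc dist x z₀ ≤ dist x z + dist z z₀ := dist_triangle _ _ _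
      _ ≤ (|r| + 1) + R := add_le_add hzd.le h2
      _ = R + (|r| + 1) := by ring
  have hFrc : IsCompact Fr :=
    Metric.isCompact_of_isClosed_isBounded isClosed_frontier
      ((hTb ε).subset (hTcl ε).frontier_subset)
  -- packing estimate
  have key : ∀ δ : ℝ, 0 < δ → δ < ε → ∃ S : Finset E, (↑S : Set E) ⊆ Fr ∧
      (Fr ⊆ ⋃ x ∈ S, closedBall x (2 * δ)) ∧
      (S.card : ℝ≥0∞) * (ENNReal.ofReal ((δ / 2) ^ n) * Vb) ≤ ρ (closedBall ε δ) := by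
    intro δ hδ hδε
    obtain ⟨T', hT'mem, hT'cov⟩ := hFrc.elim_nhds_subcover (fun x => ball x δ)
      (fun x _ => ball_mem_nhds x hδ)
    obtain ⟨S, hST, hsep, hcov⟩ := greedy_net hδ T'
    have hSFr : (↑S : Set E) ⊆ Fr := fun x hx => hT'mem x (hST hx)
    refine ⟨S, hSFr, ?_, ?_⟩
    · intro z hz
      have := hT'cov hz
      rw [mem_iUnion₂] at this
      obtain ⟨y, hyT', hzy⟩ := this
      obtain ⟨x, hxS, hyx⟩ := hcov y hyT'
      rw [mem_ball] at hzy
      refine mem_iUnion₂.2 ⟨x, hxS, ?_⟩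
      rw [mem_closedBall]
      calc dist z x ≤ dist z y + dist y x := dist_triangle _ _ _
        _ ≤ δ + δ := add_le_add hzy.le hyx.le
        _ = 2 * δ := by ring
    · -- disjoint balls of radius δ/2
      have hdisj : (↑S : Set E).PairwiseDisjoint (fun x => ball x (δ / 2)) := by
        intro x hx y hy hxy
        exact ball_disjoint_ball (by linarith [hsep hx hy hxy])
      have hsub : ∀ x ∈ S, ball x (δ / 2) ⊆ T (ε + δ) \ T (ε - δ) := by
        intro x hx y hy
        have hxl : Metric.infDist x Z = ε := hlevel (hSFr hx)
        rw [mem_ball] at hy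
        have hL : |Metric.infDist y Z - Metric.infDist x Z| ≤ dist y x := by
          have := (Metric.lipschitz_infDist_pt Z).dist_le_mul y x
          rwa [NNReal.coe_one, one_mul, Real.dist_eq] at this
        rw [abs_le, hxl] at hL
        constructor
        · show Metric.infDist y Z ≤ ε + δ
          linarith [hL.2]
        · show ¬ Metric.infDist y Z ≤ ε - δ
          push_neg
          linarith [hL.1]
      have hvol : ∑ x ∈ S, volume (ball x (δ / 2)) ≤ ρ (closedBall ε δ) := by
        rw [← measure_biUnion_finset hdisj (fun x _ => measurableSet_ball)]
        calc volume (⋃ x ∈ S, ball x (δ / 2))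
            ≤ volume (T (ε + δ) \ T (ε - δ)) :=
              measure_mono (iUnion₂_subset hsub)
          _ ≤ ρ (Set.Icc (ε - δ) (ε + δ)) := hρ (ε - δ) (ε + δ) (by linarith) (by linarith)
          _ = ρ (closedBall ε δ) := by rw [Real.closedBall_eq_Icc]
      have hball : ∀ x : E, volume (ball x (δ / 2)) = ENNReal.ofReal ((δ / 2) ^ n) * Vb := by
        intro x
        rw [Measure.addHaar_ball volume x (by positivity)]
      calc (S.card : ℝ≥0∞) * (ENNReal.ofReal ((δ / 2) ^ n) * Vb)
          = ∑ _x ∈ S, (ENNReal.ofReal ((δ / 2) ^ n) * Vb) := by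
            rw [Finset.sum_const, nsmul_eq_mul]
        _ = ∑ x ∈ S, volume (ball x (δ / 2)) := by
            refine Finset.sum_congr rfl fun x _ => (hball x).symm
        _ ≤ ρ (closedBall ε δ) := hvol
  -- scales
  set δs : ℕ → ℝ := fun j => ε / (j + 2) with hδs
  have hδpos : ∀ j : ℕ, 0 < δs j := fun j => by positivity
  have hδlt : ∀ j : ℕ, δs j < ε := by
    intro j
    rw [hδs, div_lt_iff₀ (by positivity)]
    nlinarith [hε, Nat.cast_nonneg (α := ℝ) j]
  have hδ0 : Tendsto δs atTop (𝓝 0) := by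
    have h1 : Tendsto (fun j : ℕ => ((j : ℝ) + 2)) atTop atTop :=
      tendsto_atTop_add_const_right _ 2 tendsto_natCast_atTop_atTop
    exact Tendsto.div_atTop tendsto_const_nhds h1
  choose Sf hSf1 hSf2 hSf3 using fun j : ℕ => key (δs j) (hδpos j) (hδlt j)
  have hq : Tendsto (fun j => ρ (closedBall ε (δs j)) / ENNReal.ofReal (2 * δs j))
      atTop (𝓝 L) := by
    apply hlim.comp
    rw [tendsto_nhdsWithin_iff]
    exact ⟨hδ0, Filter.Eventually.of_forall fun j => hδpos j⟩
  have hd0 : (0:ℝ) ≤ (n:ℝ) - 1 := by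
    have : (1:ℝ) ≤ (n:ℝ) := by exact_mod_cast hn
    linarith
  have hdiam : ∀ j : ℕ, ∀ i : (Sf j : Finset E),
      EMetric.diam (closedBall (i : E) (2 * δs j)) ≤ ENNReal.ofReal (4 * δs j) := by
    intro j i
    refine EMetric.diam_le fun x hx y hy => ?_
    rw [edist_dist]
    refine ENNReal.ofReal_le_ofReal ?_
    rw [mem_closedBall] at hx hy
    calc dist x y ≤ dist x (i:E) + dist y (i:E) := dist_triangle_right _ _ _
      _ ≤ 2 * δs j + 2 * δs j := add_le_add hx hy
      _ = 4 * δs j := by ring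
  have hH : μH[(n:ℝ)-1] Fr ≤ liminf (fun j => ∑ i : (Sf j : Finset E),
      (EMetric.diam (closedBall (i : E) (2 * δs j))) ^ ((n:ℝ)-1)) atTop := by
    refine Measure.hausdorffMeasure_le_liminf_sum ((n:ℝ)-1) Fr
      (fun j => ENNReal.ofReal (4 * δs j)) ?_
      (fun j (i : (Sf j : Finset E)) => closedBall (i : E) (2 * δs j)) ?_ ?_
    · have h40 : Tendsto (fun j : ℕ => 4 * δs j) atTop (𝓝 0) := by
        simpa using hδ0.const_mul 4
      have := ENNReal.tendsto_ofReal (α := ℕ) h40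
      simpa using this
    · exact Filter.Eventually.of_forall fun j i => hdiam j i
    · refine Filter.Eventually.of_forall fun j z hz => ?_
      obtain ⟨x, hxS, hzx⟩ := mem_iUnion₂.1 (hSf2 j hz)
      exact mem_iUnion.2 ⟨⟨x, hxS⟩, hzx⟩
  have perj : ∀ j : ℕ, (∑ i : (Sf j : Finset E),
      (EMetric.diam (closedBall (i : E) (2 * δs j))) ^ ((n:ℝ)-1))
      ≤ C * (ρ (closedBall ε (δs j)) / ENNReal.ofReal (2 * δs j)) := by
    intro j
    have hδp := hδpos j
    set δ := δs j with hd
    have hterm : ∀ i : (Sf j : Finset E),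
        (EMetric.diam (closedBall (i : E) (2 * δ))) ^ ((n:ℝ)-1)
          ≤ (ENNReal.ofReal (4 * δ)) ^ ((n:ℝ)-1) :=
      fun i => ENNReal.rpow_le_rpow (hdiam j i) hd0
    have hcast : (ENNReal.ofReal (4 * δ)) ^ ((n:ℝ)-1)
        = ENNReal.ofReal ((4 * δ) ^ (n - 1)) := by
      rw [show ((n:ℝ)-1) = ((n-1 : ℕ) : ℝ) by rw [Nat.cast_sub hn]; simp,
        ENNReal.rpow_natCast, ← ENNReal.ofReal_pow (by positivity)]
    have h4 : (4:ℝ) ^ (n-1) = 2 ^ (2*n-2) := by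
      rw [show (4:ℝ) = 2^2 by norm_num, ← pow_mul]
      congr 1
      omega
    have e2 : (4*δ) ^ (n-1) * (2*δ) = 2 ^ (2*n-1) * δ ^ n := by
      calc (4*δ) ^ (n-1) * (2*δ) = (4 ^ (n-1) * δ ^ (n-1)) * (2*δ) := by rw [mul_pow]
        _ = (2 ^ (2*n-2) * 2) * (δ ^ (n-1) * δ) := by rw [h4]; ring
        _ = 2 ^ (2*n-1) * δ ^ n := by
            rw [← pow_succ, ← pow_succ]
            congr 2 <;> omega
    have e1 : (δ/2) ^ n * 2 ^ (3*n) = 2 ^ (2*n) * δ ^ n := by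
      have h3 : (2:ℝ) ^ (3*n) = 2 ^ n * 2 ^ (2*n) := by
        rw [← pow_add]
        congr 1
        omega
      have h2n : (2:ℝ) ^ n ≠ 0 := by positivity
      rw [div_pow, h3]
      field_simp
    have hreal : (4*δ) ^ (n-1) * (2*δ) ≤ (δ/2) ^ n * 2 ^ (3*n) := by
      rw [e2, e1]
      have h2 : (2:ℝ) ^ (2*n-1) ≤ 2 ^ (2*n) :=
        pow_le_pow_right₀ one_le_two (by omega)
      exact mul_le_mul_of_nonneg_right h2 (by positivity)
    have hden0 : Vb * ENNReal.ofReal (2*δ) ≠ 0 :=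
      mul_ne_zero hVb0 (ENNReal.ofReal_pos.2 (by positivity)).ne'
    have hdent : Vb * ENNReal.ofReal (2*δ) ≠ ∞ := ENNReal.mul_ne_top hVbt ENNReal.ofReal_ne_top
    have hCq : C * (ρ (closedBall ε δ) / ENNReal.ofReal (2*δ))
        = (ENNReal.ofReal ((2:ℝ)^(3*n)) * ρ (closedBall ε δ)) / (Vb * ENNReal.ofReal (2*δ)) := by
      rw [hC, div_eq_mul_inv, div_eq_mul_inv, div_eq_mul_inv,
        ENNReal.mul_inv (Or.inl hVb0) (Or.inr (ENNReal.ofReal_pos.2 (by positivity)).ne')]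
      ring
    calc (∑ i : (Sf j : Finset E), (EMetric.diam (closedBall (i : E) (2 * δ))) ^ ((n:ℝ)-1))
        ≤ ∑ _i : (Sf j : Finset E), (ENNReal.ofReal (4 * δ)) ^ ((n:ℝ)-1) :=
          Finset.sum_le_sum fun i _ => hterm i
      _ = ((Sf j).card : ℝ≥0∞) * ENNReal.ofReal ((4 * δ) ^ (n-1)) := by
          rw [Finset.sum_const, nsmul_eq_mul, Finset.card_univ, Fintype.card_coe, hcast]
      _ ≤ C * (ρ (closedBall ε δ) / ENNReal.ofReal (2*δ)) := by
          rw [hCq, ENNReal.le_div_iff_mul_le (Or.inl hden0) (Or.inl hdent)]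
          calc ((Sf j).card : ℝ≥0∞) * ENNReal.ofReal ((4*δ)^(n-1)) * (Vb * ENNReal.ofReal (2*δ))
              = ((Sf j).card : ℝ≥0∞) * (ENNReal.ofReal ((4*δ)^(n-1)) * ENNReal.ofReal (2*δ)) * Vb := by
                ring
            _ = ((Sf j).card : ℝ≥0∞) * ENNReal.ofReal ((4*δ)^(n-1) * (2*δ)) * Vb := by
                rw [← ENNReal.ofReal_mul (by positivity)]
            _ ≤ ((Sf j).card : ℝ≥0∞) * ENNReal.ofReal ((δ/2)^n * 2^(3*n)) * Vb :=
                mul_le_mul_left (mul_le_mul_right (ENNReal.ofReal_le_ofReal hreal) _) _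
            _ = ENNReal.ofReal ((2:ℝ)^(3*n)) * (((Sf j).card : ℝ≥0∞) * (ENNReal.ofReal ((δ/2)^n) * Vb)) := by
                rw [ENNReal.ofReal_mul (by positivity)]
                ring
            _ ≤ ENNReal.ofReal ((2:ℝ)^(3*n)) * ρ (closedBall ε δ) :=
                mul_le_mul_right (hSf3 j) _
  calc μH[(n:ℝ)-1] Fr
      ≤ liminf (fun j => ∑ i : (Sf j : Finset E),
          (EMetric.diam (closedBall (i : E) (2 * δs j))) ^ ((n:ℝ)-1)) atTop := hH
    _ ≤ liminf (fun j => C * (ρ (closedBall ε (δs j)) / ENNReal.ofReal (2 * δs j))) atTop :=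
        liminf_le_liminf (Filter.Eventually.of_forall perj)
    _ = C * L := (ENNReal.Tendsto.const_mul hq (Or.inr hCt)).liminf_eq

end AuxHB

open Set in
/-- If `Z ⊂ ℝⁿ` is compact with vanishing `(n-1)`-dimensional Minkowski content,
then along a sequence `ε_k → 0⁺` the `(n-1)`-dimensional Hausdorff measures of the
boundaries of the tubular neighborhoods `Z_{ε_k}` tend to `0`. -/
theorem boundary_of_tubular_neighborhoods
    (n : ℕ) (hn : 2 ≤ n)
    (Z : Set (EuclideanSpace ℝ (Fin n))) (hZ : IsCompact Z)
    -- the `(n-1)`-dimensional Minkowski content of `Z` vanishes: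
    -- `Leb(Z_ε)/(2ε) → 0` as `ε → 0⁺`, where `Z_ε = {x : dist(x,Z) ≤ ε}`
    (hMink : Tendsto
      (fun ε : ℝ =>
        volume {x : EuclideanSpace ℝ (Fin n) | Metric.infDist x Z ≤ ε} / ENNReal.ofReal (2 * ε))
      (𝓝[>] (0:ℝ)) (𝓝 0)) :
    ∃ ε : ℕ → ℝ, (∀ k, 0 < ε k) ∧ Tendsto ε atTop (𝓝 (0:ℝ)) ∧
      Tendsto
        (fun k =>
          μH[(n:ℝ) - 1] (frontier {x : EuclideanSpace ℝ (Fin n) | Metric.infDist x Z ≤ ε k}))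
        atTop (𝓝 (0 : ℝ≥0∞)) := by
  by_cases hne : Z.Nonempty
  case neg =>
    rw [Set.not_nonempty_iff_eq_empty] at hne
    subst hne
    refine ⟨fun k => 1 / (k + 1), fun k => by positivity,
      tendsto_one_div_add_atTop_nhds_zero_nat, ?_⟩
    have h : ∀ k : ℕ, {x : EuclideanSpace ℝ (Fin n) | Metric.infDist x ∅ ≤ 1 / ((k:ℝ) + 1)}
        = Set.univ := by
      intro k
      refine Set.eq_univ_of_forall fun x => ?_
      simp only [Set.mem_setOf_eq, Metric.infDist_empty]
      positivity
    have heq : (fun k : ℕ => μH[(n:ℝ) - 1]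
        (frontier {x : EuclideanSpace ℝ (Fin n) | Metric.infDist x ∅ ≤ 1 / ((k:ℝ) + 1)}))
        = fun _ => (0 : ℝ≥0∞) := by
      funext k
      rw [h k, frontier_univ, measure_empty]
    rw [heq]
    exact tendsto_const_nhds
  case pos =>
  haveI : Nontrivial (EuclideanSpace ℝ (Fin n)) := by
    have : Nonempty (Fin n) := ⟨⟨0, by omega⟩⟩
    exact inferInstanceAs (Nontrivial (PiLp 2 fun _ : Fin n => ℝ))
  set T : ℝ → Set (EuclideanSpace ℝ (Fin n)) := fun r => {x | Metric.infDist x Z ≤ r} with hT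
  have hTcl : ∀ r : ℝ, IsClosed (T r) := fun r =>
    isClosed_le (Metric.continuous_infDist_pt Z) continuous_const
  have hTmono : ∀ a b : ℝ, a ≤ b → T a ⊆ T b := fun a b hab x hx => le_trans hx hab
  -- finiteness of volumes
  have hfin : ∀ r : ℝ, volume (T r) ≠ ∞ := by
    intro r
    obtain ⟨z₀, hz₀⟩ := id hne
    obtain ⟨R, hR⟩ := hZ.isBounded.subset_closedBall z₀
    have hsub : T r ⊆ closedBall z₀ (R + (|r| + 1)) := by
      intro x hx
      have h1 : Metric.infDist x Z < |r| + 1 :=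
        lt_of_le_of_lt hx (lt_of_le_of_lt (le_abs_self r) (lt_add_one _))
      obtain ⟨z, hzZ, hzd⟩ := (Metric.infDist_lt_iff hne).1 h1
      have h2 := hR hzZ
      simp only [mem_closedBall] at h2 ⊢
      calc dist x z₀ ≤ dist x z + dist z z₀ := dist_triangle _ _ _
        _ ≤ (|r| + 1) + R := add_le_add hzd.le h2
        _ = R + (|r| + 1) := by ring
    exact ((measure_mono hsub).trans_lt measure_closedBall_lt_top).ne
  -- the monotone right-continuous volume function
  set v : ℝ → ℝ := fun r => (volume (T r)).toReal with hv
  have hvmono : Monotone v := fun a b hab =>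
    ENNReal.toReal_mono (hfin b) (measure_mono (hTmono a b hab))
  have hvrc : ∀ a : ℝ, ContinuousWithinAt v (Set.Ici a) a := by
    intro a
    have hiI : (⋂ r > a, T r) = T a := by
      apply Subset.antisymm
      · intro x hx
        simp only [mem_iInter] at hx
        exact le_of_forall_gt_imp_ge_of_dense fun r hr => hx r hr
      · intro x hx
        simp only [mem_iInter]
        exact fun r hr => le_trans hx (le_of_lt hr)
    have htt : Tendsto (fun r => volume (T r)) (𝓝[>] a) (𝓝 (volume (T a))) := by
      have h := tendsto_measure_biInter_gt (μ := volume) (s := T) (a := a)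
        (fun r _ => (hTcl r).measurableSet.nullMeasurableSet)
        (fun i j _ hij => hTmono i j hij)
        ⟨a + 1, by linarith, hfin (a + 1)⟩
      rwa [hiI] at h
    have hta : Tendsto v (𝓝[>] a) (𝓝 (v a)) :=
      (ENNReal.tendsto_toReal (hfin a)).comp htt
    rw [← continuousWithinAt_Ioi_iff_Ici]
    exact hta
  set f : StieltjesFunction ℝ := ⟨v, hvmono, hvrc⟩ with hf
  set ρ : Measure ℝ := f.measure with hρdef
  have hρIcc : ∀ a b : ℝ, 0 ≤ a → a ≤ b → volume (T b \ T a) ≤ ρ (Set.Icc a b) := by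
    intro a b _ hab
    have h1 : volume (T b \ T a) = volume (T b) - volume (T a) :=
      measure_diff (hTmono a b hab) (hTcl a).measurableSet.nullMeasurableSet (hfin a)
    have h2 : volume (T b) - volume (T a) = ENNReal.ofReal (v b - v a) := by
      rw [ENNReal.ofReal_sub _ ENNReal.toReal_nonneg, hv]
      simp only [ENNReal.ofReal_toReal (hfin b), ENNReal.ofReal_toReal (hfin a)]
    rw [h1, h2, ← f.measure_Ioc a b]
    exact measure_mono Set.Ioc_subset_Icc_self
  set g : ℝ → ℝ≥0∞ := ρ.rnDeriv volume with hg
  have hgmeas : Measurable g := Measure.measurable_rnDeriv ρ volume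
  set Cst : ℝ≥0∞ := ENNReal.ofReal ((2:ℝ) ^ (3 * n))
      / volume (ball (0 : EuclideanSpace ℝ (Fin n)) 1) with hCst
  have hCt : Cst ≠ ∞ :=
    (ENNReal.div_lt_top ENNReal.ofReal_ne_top (measure_ball_pos volume _ one_pos).ne').ne
  have hfr : Module.finrank ℝ (EuclideanSpace ℝ (Fin n)) = n := finrank_euclideanSpace_fin
  -- key selection
  have key : ∀ k : ℕ, ∃ e : ℝ, (0 < e ∧ e < 1 / ((k:ℝ) + 1)) ∧
      μH[(n:ℝ) - 1] (frontier (T e)) ≤ Cst * ENNReal.ofReal (1 / ((k:ℝ) + 1)) := by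
    intro k
    set c : ℝ≥0∞ := ENNReal.ofReal (1 / ((k:ℝ) + 1)) with hc
    have hc0 : c ≠ 0 := (ENNReal.ofReal_pos.2 (by positivity)).ne'
    have hct : c ≠ ∞ := ENNReal.ofReal_ne_top
    have hev1 : ∀ᶠ b in 𝓝[>] (0:ℝ), volume (T b) / ENNReal.ofReal (2 * b) < c / 2 :=
      hMink.eventually_lt_const (ENNReal.div_pos hc0 (by norm_num))
    have hev2 : ∀ᶠ b in 𝓝[>] (0:ℝ), b < 1 / ((k:ℝ) + 1) :=
      eventually_nhdsWithin_of_eventually_nhds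
        (eventually_iff_exists_mem.2 ⟨Set.Iio _, Iio_mem_nhds (by positivity), fun y hy => hy⟩)
    have hev3 : ∀ᶠ b in 𝓝[>] (0:ℝ), 0 < b := eventually_mem_nhdsWithin
    obtain ⟨b, hb1, hb2, hb3⟩ := (hev1.and (hev2.and hev3)).exists
    have hvolb : volume (T b) < c * ENNReal.ofReal b := by
      have h2b0 : ENNReal.ofReal (2 * b) ≠ 0 := (ENNReal.ofReal_pos.2 (by linarith)).ne'
      rw [ENNReal.div_lt_iff (Or.inl h2b0) (Or.inl ENNReal.ofReal_ne_top)] at hb1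
      calc volume (T b) < c / 2 * ENNReal.ofReal (2 * b) := hb1
        _ = c * ENNReal.ofReal b := by
          rw [ENNReal.ofReal_mul (by norm_num : (0:ℝ) ≤ 2), ← mul_assoc]
          congr 1
          rw [show ENNReal.ofReal (2:ℝ) = 2 by norm_num]
          exact ENNReal.div_mul_cancel (by norm_num) (by norm_num)
    -- Markov inequality
    have hmark : c * volume ({x : ℝ | c ≤ g x} ∩ Set.Ioo 0 b) ≤ ρ (Set.Ioo 0 b) := by
      have hBadm : MeasurableSet {x : ℝ | c ≤ g x} := measurableSet_le measurable_const hgmeas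
      have h1 := mul_meas_ge_le_lintegral₀ (μ := volume.restrict (Set.Ioo 0 b))
        hgmeas.aemeasurable c
      rw [Measure.restrict_apply hBadm] at h1
      exact h1.trans (Measure.setLIntegral_rnDeriv_le _)
    have hρb : ρ (Set.Ioo 0 b) ≤ volume (T b) := by
      calc ρ (Set.Ioo 0 b) ≤ ρ (Set.Ioc 0 b) := measure_mono Set.Ioo_subset_Ioc_self
        _ = ENNReal.ofReal (v b - v 0) := f.measure_Ioc 0 b
        _ ≤ ENNReal.ofReal (v b) := ENNReal.ofReal_le_ofReal (by
            have : 0 ≤ v 0 := ENNReal.toReal_nonneg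
            linarith)
        _ = volume (T b) := ENNReal.ofReal_toReal (hfin b)
    have hsmall : volume ({x : ℝ | c ≤ g x} ∩ Set.Ioo 0 b) < ENNReal.ofReal b := by
      have h2 : c * volume ({x : ℝ | c ≤ g x} ∩ Set.Ioo 0 b) < c * ENNReal.ofReal b :=
        lt_of_le_of_lt (hmark.trans hρb) hvolb
      exact (ENNReal.mul_lt_mul_iff_right hc0 hct).1 h2
    -- find a good point
    have hbesi := Besicovitch.ae_tendsto_rnDeriv ρ volume
    rw [MeasureTheory.ae_iff] at hbesi
    have hgood : ∃ e : ℝ, e ∈ Set.Ioo (0:ℝ) b ∧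
        Tendsto (fun r => ρ (closedBall e r) / volume (closedBall e r)) (𝓝[>] (0:ℝ))
          (𝓝 (g e)) ∧ g e < c := by
      by_contra hcon
      push_neg at hcon
      have hsubset : Set.Ioo (0:ℝ) b ⊆ ({x : ℝ | c ≤ g x} ∩ Set.Ioo 0 b) ∪
          {x : ℝ | ¬ Tendsto (fun r => ρ (closedBall x r) / volume (closedBall x r))
            (𝓝[>] (0:ℝ)) (𝓝 (g x))} := by
        intro e he
        by_cases hP : Tendsto (fun r => ρ (closedBall e r) / volume (closedBall e r))
          (𝓝[>] (0:ℝ)) (𝓝 (g e))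
        · exact Or.inl ⟨hcon e he hP, he⟩
        · exact Or.inr hP
      have hcontr : volume (Set.Ioo (0:ℝ) b) < ENNReal.ofReal b := by
        calc volume (Set.Ioo (0:ℝ) b)
            ≤ volume (({x : ℝ | c ≤ g x} ∩ Set.Ioo 0 b)) +
              volume {x : ℝ | ¬ Tendsto (fun r => ρ (closedBall x r) / volume (closedBall x r))
                (𝓝[>] (0:ℝ)) (𝓝 (g x))} :=
              le_trans (measure_mono hsubset) (measure_union_le _ _)
          _ = volume (({x : ℝ | c ≤ g x} ∩ Set.Ioo 0 b)) := by rw [hbesi, add_zero]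
          _ < ENNReal.ofReal b := hsmall
      rw [Real.volume_Ioo, sub_zero] at hcontr
      exact lt_irrefl _ hcontr
    obtain ⟨e, heIoo, heT, hec⟩ := hgood
    simp only [Real.volume_closedBall] at heT
    have hbound := hausdorff_bound Z hne hZ.isBounded ρ hρIcc e heIoo.1 (g e) heT
    rw [hfr] at hbound
    refine ⟨e, ⟨heIoo.1, lt_trans heIoo.2 hb2⟩, ?_⟩
    calc μH[(n:ℝ) - 1] (frontier (T e)) ≤ Cst * g e := hbound
      _ ≤ Cst * c := mul_le_mul_right hec.le _
  -- assemble the sequence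
  choose e he1 he2 using key
  refine ⟨e, fun k => (he1 k).1, ?_, ?_⟩
  · exact squeeze_zero (fun k => (he1 k).1.le) (fun k => (he1 k).2.le)
      tendsto_one_div_add_atTop_nhds_zero_nat
  · have hupper : Tendsto (fun k : ℕ => Cst * ENNReal.ofReal (1 / ((k:ℝ) + 1))) atTop
        (𝓝 0) := by
      have h1 : Tendsto (fun k : ℕ => ENNReal.ofReal (1 / ((k:ℝ) + 1))) atTop (𝓝 0) := by
        simpa using ENNReal.tendsto_ofReal (α := ℕ) tendsto_one_div_add_atTop_nhds_zero_nat
      simpa using ENNReal.Tendsto.const_mul h1 (Or.inr hCt)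
    exact tendsto_of_tendsto_of_tendsto_of_le_of_le tendsto_const_nhds hupper
      (fun k => zero_le) (fun k => he2 k)
end
end

section
/- Let n ≥ 3, N = 2^⌊n/2⌋, and let α₁,…,αₙ be complex N×N matrices satisfying the Clifford relations. Let ψ : B₁ → ℂᴺ be of class C^{1,α} on the open unit ball B₁ ⊂ ℝⁿ for some α ∈ (0,1), not identically zero, and solving the critical Dirac equation Dψ = |ψ|^{2/(n−1)}ψ pointwise on B₁. Then the set Z₁ := { x ∈ B₁ : ψ(x) = 0 and dψ(x) ≠ 0 }, consisting of the zeros of ψ at which the total derivative does not vanish, has Hausdorff dimension at most n − 2. -/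
open MeasureTheory Metric Filter Matrix
open scoped ENNReal NNReal

noncomputable section

open Set Module Topology

/-- Locality principle for the Hausdorff dimension. -/
theorem dimH_le_of_locally' {X : Type*} [EMetricSpace X] [SecondCountableTopology X]
    {s : Set X} {d : ℝ≥0∞} (h : ∀ x ∈ s, ∃ t ∈ 𝓝[s] x, dimH t ≤ d) : dimH s ≤ d := by
  choose! t htn htd using h
  rcases TopologicalSpace.countable_cover_nhdsWithin htn with ⟨u, hus, huc, huU⟩
  calc dimH s ≤ dimH (⋃ x ∈ u, t x) := dimH_mono huU
  _ = ⨆ x ∈ u, dimH (t x) := dimH_bUnion huc _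
  _ ≤ d := iSup₂_le fun x hx => htd x (hus hx)

/-- A pair of continuous linear functionals dual to a linearly independent pair of vectors. -/
theorem exists_dual_pair {V : Type*} [NormedAddCommGroup V] [NormedSpace ℝ V]
    [FiniteDimensional ℝ V] {w₁ w₂ : V} (h : LinearIndependent ℝ ![w₁, w₂]) :
    ∃ ℓ : V →L[ℝ] ℝ × ℝ, ℓ w₁ = (1, 0) ∧ ℓ w₂ = (0, 1) := by
  have hne : w₁ ≠ w₂ := by
    have := h.injective.ne (a₁ := (0 : Fin 2)) (a₂ := 1) (by decide)
    simpa using this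
  have hs : LinearIndepOn ℝ id (Set.range ![w₁, w₂]) := h.linearIndepOn_id
  let b := Module.Basis.extend hs
  obtain ⟨v₁, hv₁⟩ : ∃ i, b i = w₁ :=
    ⟨⟨w₁, hs.subset_extend _ ⟨0, rfl⟩⟩, Module.Basis.extend_apply_self hs _⟩
  obtain ⟨v₂, hv₂⟩ : ∃ i, b i = w₂ :=
    ⟨⟨w₂, hs.subset_extend _ ⟨1, rfl⟩⟩, Module.Basis.extend_apply_self hs _⟩
  have hvv : v₁ ≠ v₂ := by rintro rfl; exact hne (hv₁ ▸ hv₂)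
  have key1 : LinearMap.toContinuousLinearMap ((b.coord v₁).prod (b.coord v₂)) (b v₁) = (1, 0) := by
    simp only [LinearMap.coe_toContinuousLinearMap', LinearMap.prod_apply, Pi.prod,
      Basis.coord_apply, Basis.repr_self, Finsupp.single_eq_same, Finsupp.single_apply]
    simp [hvv]
  have key2 : LinearMap.toContinuousLinearMap ((b.coord v₁).prod (b.coord v₂)) (b v₂) = (0, 1) := by
    simp only [LinearMap.coe_toContinuousLinearMap', LinearMap.prod_apply, Pi.prod,
      Basis.coord_apply, Basis.repr_self, Finsupp.single_eq_same, Finsupp.single_apply]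
    simp [Ne.symm hvv]
  rw [hv₁] at key1
  rw [hv₂] at key2
  exact ⟨_, key1, key2⟩

/-- Near a point where a map to `ℝ²` has surjective strict derivative, the level set has
Hausdorff dimension at most the dimension of the kernel of the derivative. -/
theorem local_level_set_dimH_le {n : ℕ} {f : EuclideanSpace ℝ (Fin n) → ℝ × ℝ}
    {f' : EuclideanSpace ℝ (Fin n) →L[ℝ] ℝ × ℝ} {a : EuclideanSpace ℝ (Fin n)}
    (hf : HasStrictFDerivAt f f' a) (hsurj : LinearMap.range (f' : EuclideanSpace ℝ (Fin n) →ₗ[ℝ] ℝ × ℝ) = ⊤) :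
    ∃ t ∈ 𝓝 a, dimH {x ∈ t | f x = f a} ≤ (finrank ℝ (LinearMap.ker (f' : EuclideanSpace ℝ (Fin n) →ₗ[ℝ] ℝ × ℝ)) : ℝ≥0∞) := by
  classical
  let K : Submodule ℝ (EuclideanSpace ℝ (Fin n)) := LinearMap.ker (f' : EuclideanSpace ℝ (Fin n) →ₗ[ℝ] ℝ × ℝ)
  haveI : CompleteSpace K := FiniteDimensional.complete ℝ K
  let π : EuclideanSpace ℝ (Fin n) →L[ℝ] K := Submodule.orthogonalProjectionOnto K
  let T : EuclideanSpace ℝ (Fin n) →L[ℝ] (ℝ × ℝ) × K := f'.prod π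
  have hinj : Function.Injective T := by
    rw [injective_iff_map_eq_zero]
    intro x hx
    have h1 : f' x = 0 := congrArg Prod.fst hx
    have h2 : π x = 0 := congrArg Prod.snd hx
    have hxK : x ∈ K := h1
    have := Submodule.orthogonalProjectionOnto_mem_subspace_eq_self (K := K) ⟨x, hxK⟩
    rw [show ((⟨x, hxK⟩ : K) : EuclideanSpace ℝ (Fin n)) = x from rfl, h2] at this
    exact congrArg Subtype.val this.symm
  have hdim : finrank ℝ (EuclideanSpace ℝ (Fin n)) = finrank ℝ ((ℝ × ℝ) × K) := by
    have hrn := LinearMap.finrank_range_add_finrank_ker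
      (f' : EuclideanSpace ℝ (Fin n) →ₗ[ℝ] ℝ × ℝ)
    rw [show LinearMap.range (f' : EuclideanSpace ℝ (Fin n) →ₗ[ℝ] ℝ × ℝ) = ⊤ from hsurj,
      finrank_top] at hrn
    rw [Module.finrank_prod]
    exact hrn.symm
  let eLin : EuclideanSpace ℝ (Fin n) ≃ₗ[ℝ] (ℝ × ℝ) × K :=
    LinearMap.linearEquivOfInjective (T : EuclideanSpace ℝ (Fin n) →ₗ[ℝ] (ℝ × ℝ) × K) hinj hdim
  let e : EuclideanSpace ℝ (Fin n) ≃L[ℝ] (ℝ × ℝ) × K := eLin.toContinuousLinearEquiv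
  have hecoe : (e : EuclideanSpace ℝ (Fin n) →L[ℝ] (ℝ × ℝ) × K) = T := by
    ext x <;> rfl
  have hg : HasStrictFDerivAt (fun x => (f x, π x))
      (e : EuclideanSpace ℝ (Fin n) →L[ℝ] (ℝ × ℝ) × K) a := by
    rw [hecoe]; exact hf.prodMk π.hasStrictFDerivAt
  set g : EuclideanSpace ℝ (Fin n) → (ℝ × ℝ) × K := fun x => (f x, π x) with hgdef
  obtain ⟨C, s, hs, hlip⟩ := hg.to_localInverse.exists_lipschitzOnWith
  have hle : ∀ᶠ x in 𝓝 a, hg.localInverse g e a (g x) = x := hg.eventually_left_inverse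
  have hgs : g ⁻¹' s ∈ 𝓝 a := hg.continuousAt.preimage_mem_nhds hs
  refine ⟨(g ⁻¹' s) ∩ {x | hg.localInverse g e a (g x) = x}, inter_mem hgs hle, ?_⟩
  have hsub : {x ∈ (g ⁻¹' s) ∩ {x | hg.localInverse g e a (g x) = x} | f x = f a} ⊆
      (hg.localInverse g e a) '' (s ∩ ({f a} ×ˢ univ)) := by
    rintro x ⟨⟨hxs, hxinv⟩, hxf⟩
    exact ⟨g x, ⟨hxs, by simp [hgdef, hxf]⟩, hxinv⟩
  calc dimH {x ∈ (g ⁻¹' s) ∩ {x | hg.localInverse g e a (g x) = x} | f x = f a}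
      ≤ dimH ((hg.localInverse g e a) '' (s ∩ ({f a} ×ˢ univ))) := dimH_mono hsub
    _ ≤ dimH (s ∩ ({f a} ×ˢ univ)) := (hlip.mono inter_subset_left).dimH_image_le
    _ ≤ dimH (({f a} : Set (ℝ × ℝ)) ×ˢ (univ : Set K)) := dimH_mono inter_subset_right
    _ = dimH ((Prod.mk (f a)) '' (univ : Set K)) := by rw [Set.singleton_prod]
    _ ≤ dimH (univ : Set K) := (LipschitzWith.prodMk_left (f a)).dimH_image_le _
    _ = (finrank ℝ K : ℝ≥0∞) := Real.dimH_univ_eq_finrank K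

/-- The Clifford anticommutation relations `αⱼαₖ + αₖαⱼ = -2 δⱼₖ Id`. -/
def CliffordRel {n N : ℕ} (α : Fin n → Matrix (Fin N) (Fin N) ℂ) : Prop :=
  ∀ j k, α j * α k + α k * α j = (-2 : ℂ) • (if j = k then (1 : Matrix (Fin N) (Fin N) ℂ) else 0)

/-- The Euclidean Dirac operator `Dψ = Σⱼ αⱼ ∂ⱼψ`. -/
def diracOp {n N : ℕ} (α : Fin n → Matrix (Fin N) (Fin N) ℂ)
    (ψ : EuclideanSpace ℝ (Fin n) → EuclideanSpace ℂ (Fin N))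
    (x : EuclideanSpace ℝ (Fin n)) : EuclideanSpace ℂ (Fin N) :=
  ∑ j : Fin n, Matrix.toEuclideanLin (α j) (fderiv ℝ ψ x (EuclideanSpace.single j (1:ℝ)))

theorem not_indep_pair {V : Type*} [AddCommGroup V] [Module ℝ V] {w z : V} (hw : w ≠ 0)
    (h : ¬ LinearIndependent ℝ ![w, z]) : ∃ c : ℝ, z = c • w := by
  rw [LinearIndependent.pair_iff' hw] at h
  push_neg at h
  obtain ⟨c, hc⟩ := h
  exact ⟨c, hc.symm⟩

/-- If the Clifford-Dirac combination of the directional derivatives vanishes and the linear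
map `L` is nonzero, then `L` has real rank at least two. -/
theorem rank_ge_two {n N : ℕ} (α : Fin n → Matrix (Fin N) (Fin N) ℂ) (hcl : CliffordRel α)
    {L : EuclideanSpace ℝ (Fin n) →L[ℝ] EuclideanSpace ℂ (Fin N)}
    (hL : L ≠ 0)
    (hD : ∑ j : Fin n, Matrix.toEuclideanLin (α j) (L (EuclideanSpace.single j (1:ℝ))) = 0) :
    ∃ u v, LinearIndependent ℝ ![L u, L v] := by
  classical
  by_contra hcon
  push_neg at hcon
  obtain ⟨j₀, hj₀⟩ : ∃ j, L (EuclideanSpace.single j (1:ℝ)) ≠ 0 := by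
    by_contra hz
    push_neg at hz
    apply hL
    ext x
    have hx : x = ∑ j, x j • (EuclideanSpace.single j (1:ℝ)) := by
      have := (EuclideanSpace.basisFun (Fin n) ℝ).sum_repr x
      simpa [EuclideanSpace.basisFun_repr, EuclideanSpace.basisFun_apply] using this.symm
    rw [hx]
    simp [map_sum, hz]
  set w : EuclideanSpace ℂ (Fin N) := L (EuclideanSpace.single j₀ (1:ℝ)) with hw
  have hc : ∀ j, ∃ c : ℝ, L (EuclideanSpace.single j (1:ℝ)) = c • w := fun j =>
    not_indep_pair hj₀ (hcon (EuclideanSpace.single j₀ (1:ℝ)) (EuclideanSpace.single j (1:ℝ)))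
  choose c hcc using hc
  have hcj₀ : c j₀ = 1 := by
    have h1 : c j₀ • w = w := (hcc j₀).symm
    have h2 : c j₀ • w - w = 0 := sub_eq_zero.mpr h1
    nth_rewrite 2 [← one_smul ℝ w] at h2
    rw [← sub_smul] at h2
    rcases smul_eq_zero.mp h2 with h | h
    · linarith [sub_eq_zero.mp (by exact_mod_cast h : (c j₀ - 1 : ℝ) = 0)]
    · exact absurd h hj₀
  set A : Matrix (Fin N) (Fin N) ℂ := ∑ j, (c j : ℂ) • α j with hA
  have hterm : ∀ j, Matrix.toEuclideanLin (α j) (L (EuclideanSpace.single j (1:ℝ)))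
      = Matrix.toEuclideanLin ((c j : ℂ) • α j) w := by
    intro j
    rw [hcc j, ← algebraMap_smul ℂ (c j) w, _root_.map_smul, _root_.map_smul,
      LinearMap.smul_apply]
    rfl
  have hAw : Matrix.toEuclideanLin A w = 0 := by
    rw [hA, map_sum, LinearMap.sum_apply, ← hD]
    exact Finset.sum_congr rfl fun j _ => (hterm j).symm
  have hS : (0:ℝ) < ∑ j, (c j)^2 := by
    refine Finset.sum_pos' (fun j _ => sq_nonneg _) ⟨j₀, Finset.mem_univ _, by rw [hcj₀]; norm_num⟩
  have hAA : A * A = (-(((∑ j, (c j)^2 : ℝ) : ℂ))) • 1 := by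
    have h1 : A * A = ∑ j, ∑ k, ((c j : ℂ) * c k) • (α j * α k) := by
      rw [hA, Finset.sum_mul_sum]
      exact Finset.sum_congr rfl fun j _ => Finset.sum_congr rfl fun k _ =>
        smul_mul_smul_comm (c j : ℂ) (α j) (c k : ℂ) (α k)
    have h2 : (2:ℂ) • (A * A) = ((-2) * ((∑ j, (c j)^2 : ℝ) : ℂ)) • 1 := by
      calc (2:ℂ) • (A * A)
          = (∑ j, ∑ k, ((c j : ℂ) * c k) • (α j * α k))
            + ∑ j, ∑ k, ((c j : ℂ) * c k) • (α j * α k) := by rw [h1, two_smul]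
        _ = (∑ j, ∑ k, ((c j : ℂ) * c k) • (α j * α k))
            + ∑ k, ∑ j, ((c j : ℂ) * c k) • (α j * α k) := by rw [Finset.sum_comm]
        _ = ∑ j, ∑ k, (((c j : ℂ) * c k) • (α j * α k) + ((c k : ℂ) * c j) • (α k * α j)) := by
            rw [← Finset.sum_add_distrib]
            exact Finset.sum_congr rfl fun j _ => (Finset.sum_add_distrib).symm
        _ = ∑ j, ∑ k, ((c j : ℂ) * c k) • (α j * α k + α k * α j) := by
            refine Finset.sum_congr rfl fun j _ => Finset.sum_congr rfl fun k _ => ?_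
            rw [smul_add, mul_comm ((c k : ℂ)) ((c j : ℂ))]
        _ = ∑ j, ∑ k, ((c j : ℂ) * c k) •
              ((-2 : ℂ) • (if j = k then (1 : Matrix (Fin N) (Fin N) ℂ) else 0)) := by
            refine Finset.sum_congr rfl fun j _ => Finset.sum_congr rfl fun k _ => ?_
            rw [hcl j k]
        _ = ∑ j, ((c j : ℂ) * c j) • ((-2 : ℂ) • (1 : Matrix (Fin N) (Fin N) ℂ)) := by
            refine Finset.sum_congr rfl fun j _ => ?_
            rw [Finset.sum_eq_single j]
            · simp
            · intro k _ hk
              simp [Ne.symm hk]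
            · simp
        _ = ((-2) * ((∑ j, (c j)^2 : ℝ) : ℂ)) • 1 := by
            simp only [smul_smul]
            rw [← Finset.sum_smul]
            congr 1
            push_cast
            rw [Finset.mul_sum]
            exact Finset.sum_congr rfl fun j _ => by ring
    have := congrArg (fun M => (2:ℂ)⁻¹ • M) h2
    simpa [smul_smul, ← mul_assoc] using this
  have hAAw : Matrix.toEuclideanLin (A * A) w = 0 := by
    have hmul : Matrix.toEuclideanLin (A * A) w
        = Matrix.toEuclideanLin A (Matrix.toEuclideanLin A w) := by
      simp only [Matrix.toEuclideanLin_apply]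
      rw [Matrix.mulVec_mulVec]
    rw [hmul, hAw, map_zero]
  rw [hAA, _root_.map_smul, LinearMap.smul_apply] at hAAw
  have h1w : Matrix.toEuclideanLin (1 : Matrix (Fin N) (Fin N) ℂ) w = w := by
    simp [Matrix.toEuclideanLin_apply]
  rw [h1w] at hAAw
  rcases smul_eq_zero.mp hAAw with h | h
  · rw [neg_eq_zero] at h
    exact_mod_cast absurd (by exact_mod_cast h : ((∑ j, (c j)^2 : ℝ) : ℂ) = 0)
      (by exact_mod_cast ne_of_gt hS)
  · exact absurd h hj₀

/-- The set `Z₁` of zeros of a nontrivial `C^{1,α}` solution of the critical Dirac equation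
`Dψ = |ψ|^{2/(n-1)}ψ` on the unit ball of `ℝⁿ`, `n ≥ 3`, at which the total derivative does
not vanish has Hausdorff dimension at most `n - 2`. -/
theorem first_order_nodal_set_dimension
    (n : ℕ) (hn : 3 ≤ n) (N : ℕ) (hN : N = 2 ^ (n / 2))
    (α : Fin n → Matrix (Fin N) (Fin N) ℂ)
    (hcl : CliffordRel α)
    (ψ : EuclideanSpace ℝ (Fin n) → EuclideanSpace ℂ (Fin N))
    -- `ψ` is `C^{1,a}` on the open unit ball for some `a ∈ (0,1)`
    (a : ℝ≥0) (ha0 : 0 < a) (ha1 : a < 1)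
    (hreg : ContDiffOn ℝ 1 ψ (Metric.ball 0 1))
    (hHol : ∃ C : ℝ≥0, HolderOnWith C a (fderiv ℝ ψ) (Metric.ball 0 1))
    -- `ψ` is not identically zero on the unit ball
    (hne : ∃ x ∈ Metric.ball (0 : EuclideanSpace ℝ (Fin n)) 1, ψ x ≠ 0)
    -- `ψ` solves the critical Dirac equation pointwise on the unit ball
    (heq : ∀ x ∈ Metric.ball (0 : EuclideanSpace ℝ (Fin n)) 1,
      diracOp α ψ x = (‖ψ x‖ ^ ((2:ℝ) / ((n:ℝ) - 1))) • ψ x) :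
    dimH {x : EuclideanSpace ℝ (Fin n) |
        x ∈ Metric.ball (0 : EuclideanSpace ℝ (Fin n)) 1 ∧ ψ x = 0 ∧ fderiv ℝ ψ x ≠ 0}
      ≤ (n : ℝ≥0∞) - 2 := by
  classical
  haveI : FiniteDimensional ℝ (EuclideanSpace ℂ (Fin N)) :=
    Module.Finite.trans ℂ (EuclideanSpace ℂ (Fin N))
  set Z : Set (EuclideanSpace ℝ (Fin n)) :=
    {x : EuclideanSpace ℝ (Fin n) |
        x ∈ Metric.ball (0 : EuclideanSpace ℝ (Fin n)) 1 ∧ ψ x = 0 ∧ fderiv ℝ ψ x ≠ 0} with hZ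
  have key : ∀ x₀ ∈ Z, ∃ t ∈ 𝓝[Z] x₀, dimH t ≤ ((n - 2 : ℕ) : ℝ≥0∞) := by
    rintro x₀ ⟨hball, h0, hd⟩
    have hstrict : HasStrictFDerivAt ψ (fderiv ℝ ψ x₀) x₀ :=
      (hreg.contDiffAt (Metric.isOpen_ball.mem_nhds hball)).hasStrictFDerivAt one_ne_zero
    have hD : ∑ j : Fin n, Matrix.toEuclideanLin (α j)
        ((fderiv ℝ ψ x₀) (EuclideanSpace.single j (1:ℝ))) = 0 := by
      have h := heq x₀ hball
      rw [h0, smul_zero] at h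
      simpa [diracOp] using h
    obtain ⟨u, v, huv⟩ := rank_ge_two α hcl hd hD
    obtain ⟨ℓ, hw1, hw2⟩ := exists_dual_pair huv
    set f : EuclideanSpace ℝ (Fin n) → ℝ × ℝ := fun x => ℓ (ψ x) with hf
    have hstrictf : HasStrictFDerivAt f (ℓ.comp (fderiv ℝ ψ x₀)) x₀ :=
      ℓ.hasStrictFDerivAt.comp x₀ hstrict
    have hsurj : LinearMap.range ((ℓ.comp (fderiv ℝ ψ x₀)) : EuclideanSpace ℝ (Fin n) →ₗ[ℝ] ℝ × ℝ) = ⊤ := by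
      rw [LinearMap.range_eq_top]
      rintro ⟨s, t⟩
      refine ⟨s • u + t • v, ?_⟩
      simp only [ContinuousLinearMap.coe_comp', Function.comp_apply, map_add,
        _root_.map_smul, hw1, hw2, Prod.smul_mk, smul_eq_mul, Prod.mk_add_mk]
      simp [hw1, hw2]
    have hker : finrank ℝ (LinearMap.ker ((ℓ.comp (fderiv ℝ ψ x₀)) : EuclideanSpace ℝ (Fin n) →ₗ[ℝ] ℝ × ℝ)) = n - 2 := by
      have hrn := LinearMap.finrank_range_add_finrank_ker
        ((ℓ.comp (fderiv ℝ ψ x₀)) : EuclideanSpace ℝ (Fin n) →ₗ[ℝ] ℝ × ℝ)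
      rw [show LinearMap.range ((ℓ.comp (fderiv ℝ ψ x₀)) :
            EuclideanSpace ℝ (Fin n) →ₗ[ℝ] ℝ × ℝ) = ⊤ from hsurj,
        finrank_top, finrank_euclideanSpace_fin] at hrn
      have h2 : finrank ℝ (ℝ × ℝ) = 2 := by
        rw [Module.finrank_prod, Module.finrank_self]
      rw [h2] at hrn
      have hkk : LinearMap.ker ((ℓ.comp (fderiv ℝ ψ x₀)) :
          EuclideanSpace ℝ (Fin n) →ₗ[ℝ] ℝ × ℝ) = LinearMap.ker ((ℓ.comp (fderiv ℝ ψ x₀)) : EuclideanSpace ℝ (Fin n) →ₗ[ℝ] ℝ × ℝ) := rfl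
      rw [hkk] at hrn
      omega
    obtain ⟨t, htmem, htdim⟩ := local_level_set_dimH_le hstrictf hsurj
    refine ⟨Z ∩ t, inter_mem self_mem_nhdsWithin (mem_nhdsWithin_of_mem_nhds htmem), ?_⟩
    have hsub : Z ∩ t ⊆ {x ∈ t | f x = f x₀} := by
      rintro x ⟨⟨_, hx0, _⟩, hxt⟩
      exact ⟨hxt, by simp [hf, hx0, h0]⟩
    calc dimH (Z ∩ t) ≤ dimH {x ∈ t | f x = f x₀} := dimH_mono hsub
      _ ≤ (finrank ℝ (LinearMap.ker ((ℓ.comp (fderiv ℝ ψ x₀)) : EuclideanSpace ℝ (Fin n) →ₗ[ℝ] ℝ × ℝ)) : ℝ≥0∞) := htdim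
      _ = ((n - 2 : ℕ) : ℝ≥0∞) := by rw [hker]
  have hZdim : dimH Z ≤ ((n - 2 : ℕ) : ℝ≥0∞) := dimH_le_of_locally' key
  refine le_trans hZdim ?_
  rw [ENNReal.natCast_sub]
  simp

end
end

section
/- Let n ≥ 2, N = 2^⌊n/2⌋, and let α₁,…,αₙ be complex N×N matrices satisfying the Clifford relations. Let ψ : B₁ → ℂᴺ be of class C¹ on the open unit ball B₁ ⊂ ℝⁿ and solve the critical Dirac equation Dψ = |ψ|^{2/(n−1)}ψ pointwise on B₁. If x₀ ∈ B₁ satisfies ψ(x₀) = 0 and dψ(x₀) ≠ 0, then the real rank of the total derivative dψ(x₀) : ℝⁿ → ℂᴺ (viewed as an ℝ-linear map into ℝ^{2N}) is at least 2. In particular, there is no nonzero c ∈ ℂᴺ and nonzero v ∈ ℝⁿ with ∂ⱼψ(x₀) = vⱼ c for all j. -/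
open MeasureTheory Metric Filter Matrix
open scoped ENNReal NNReal

noncomputable section

lemma real_smul_eq {N : ℕ} (r : ℝ) (c : EuclideanSpace ℂ (Fin N)) : r • c = (r : ℂ) • c := by
  rw [show (r : ℂ) = r • (1:ℂ) by simp, smul_assoc, one_smul]

lemma toEuclideanLin_comp {N : ℕ} (X Y : Matrix (Fin N) (Fin N) ℂ)
    (x : EuclideanSpace ℂ (Fin N)) :
    Matrix.toEuclideanLin (X * Y) x
      = Matrix.toEuclideanLin X (Matrix.toEuclideanLin Y x) := by
  simp [Matrix.toEuclideanLin_apply, Matrix.mulVec_mulVec]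

/-- Key algebraic fact: the Clifford symbol kills no rank-one data. -/
lemma clifford_no_rank_one {n N : ℕ} (α : Fin n → Matrix (Fin N) (Fin N) ℂ)
    (hcl : CliffordRel α) (c : EuclideanSpace ℂ (Fin N)) (v : EuclideanSpace ℝ (Fin n))
    (hv : v ≠ 0)
    (h : ∑ j : Fin n, Matrix.toEuclideanLin (α j) ((v j) • c) = 0) : c = 0 := by
  set A : Matrix (Fin N) (Fin N) ℂ := ∑ j, (v j : ℂ) • α j with hA
  have hAc : Matrix.toEuclideanLin A c = 0 := by
    rw [hA, map_sum, LinearMap.sum_apply, ← h]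
    refine Finset.sum_congr rfl fun j _ => ?_
    simp only [real_smul_eq, _root_.map_smul, LinearMap.smul_apply]
  have expand : A * A = ∑ j, ∑ k, ((v j : ℂ) * v k) • (α j * α k) := by
    rw [hA, Finset.sum_mul_sum]
    refine Finset.sum_congr rfl fun j _ => Finset.sum_congr rfl fun k _ => ?_
    rw [smul_mul_assoc, mul_smul_comm, smul_smul]
  have expand2 : A * A = ∑ j, ∑ k, ((v j : ℂ) * v k) • (α k * α j) := by
    rw [expand, Finset.sum_comm]
    refine Finset.sum_congr rfl fun j _ => Finset.sum_congr rfl fun k _ => ?_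
    rw [mul_comm ((v k : ℂ))]
  have hsum : A * A + A * A
      = ∑ j, ∑ k, ((v j : ℂ) * v k) • (α j * α k + α k * α j) := by
    calc A * A + A * A
        = (∑ j, ∑ k, ((v j : ℂ) * v k) • (α j * α k))
          + ∑ j, ∑ k, ((v j : ℂ) * v k) • (α k * α j) := by rw [← expand, ← expand2]
      _ = _ := by
          rw [← Finset.sum_add_distrib]
          refine Finset.sum_congr rfl fun j _ => ?_
          rw [← Finset.sum_add_distrib]
          exact Finset.sum_congr rfl fun k _ => (smul_add _ _ _).symm
  have hsum2 : A * A + A * A = ((-2:ℂ) * ∑ j, (v j : ℂ)^2) • 1 := by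
    rw [hsum]
    have hrepl : ∀ j k : Fin n, ((v j : ℂ) * v k) • (α j * α k + α k * α j)
        = ((v j : ℂ) * v k) • ((-2:ℂ) • (if j = k then (1 : Matrix (Fin N) (Fin N) ℂ) else 0)) :=
      fun j k => by rw [hcl j k]
    simp only [hrepl, smul_ite, smul_zero, Finset.sum_ite_eq, Finset.mem_univ, if_true]
    rw [Finset.mul_sum, Finset.sum_smul]
    refine Finset.sum_congr rfl fun j _ => ?_
    rw [smul_smul]
    congr 1
    ring
  have h0 : ((-2:ℂ) * ∑ j, (v j : ℂ)^2) • c = 0 := by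
    have h1 : Matrix.toEuclideanLin (A * A + A * A) c = 0 := by
      rw [map_add, LinearMap.add_apply, toEuclideanLin_comp, hAc, map_zero]
      simp
    rw [hsum2, _root_.map_smul, LinearMap.smul_apply] at h1
    simpa [Matrix.toEuclideanLin_apply] using h1
  have hj : ∃ j, v j ≠ 0 := by
    by_contra hall
    push_neg at hall
    exact hv (PiLp.ext fun i => by simp [hall i])
  obtain ⟨j, hjne⟩ := hj
  have hpos : (0:ℝ) < ∑ j, (v j)^2 :=
    Finset.sum_pos' (fun i _ => sq_nonneg _) ⟨j, Finset.mem_univ j, by positivity⟩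
  have hcast : ∑ j, (v j : ℂ)^2 = ((∑ j, (v j)^2 : ℝ) : ℂ) := by push_cast; ring
  have hne : ((-2:ℂ) * ∑ j, (v j : ℂ)^2) ≠ 0 := by
    rw [hcast]
    exact mul_ne_zero (by norm_num) (by exact_mod_cast hpos.ne')
  exact (smul_eq_zero.mp h0).resolve_left hne

/-- At a zero of a `C¹` solution of the critical Dirac equation where the total derivative does
not vanish, the derivative has real rank at least `2`; in particular the partial derivatives
`∂ⱼψ(x₀)` cannot all be real multiples `vⱼ c` of a single vector `c`. -/
theorem rank_at_nondegenerate_zero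
    (n : ℕ) (hn : 2 ≤ n) (N : ℕ) (hN : N = 2 ^ (n / 2))
    (α : Fin n → Matrix (Fin N) (Fin N) ℂ)
    (hcl : CliffordRel α)
    (ψ : EuclideanSpace ℝ (Fin n) → EuclideanSpace ℂ (Fin N))
    -- `ψ` is `C¹` on the open unit ball
    (hreg : ContDiffOn ℝ 1 ψ (Metric.ball 0 1))
    -- `ψ` solves the critical Dirac equation pointwise on the unit ball
    (heq : ∀ x ∈ Metric.ball (0 : EuclideanSpace ℝ (Fin n)) 1,
      diracOp α ψ x = (‖ψ x‖ ^ ((2:ℝ) / ((n:ℝ) - 1))) • ψ x)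
    (x₀ : EuclideanSpace ℝ (Fin n)) (hx₀ : x₀ ∈ Metric.ball (0 : EuclideanSpace ℝ (Fin n)) 1)
    (hzero : ψ x₀ = 0) (hder : fderiv ℝ ψ x₀ ≠ 0) :
    2 ≤ Module.finrank ℝ (LinearMap.range ((fderiv ℝ ψ x₀) :
        EuclideanSpace ℝ (Fin n) →ₗ[ℝ] EuclideanSpace ℂ (Fin N))) ∧
    ¬ ∃ (c : EuclideanSpace ℂ (Fin N)) (v : EuclideanSpace ℝ (Fin n)), c ≠ 0 ∧ v ≠ 0 ∧
        ∀ j : Fin n, fderiv ℝ ψ x₀ (EuclideanSpace.single j (1:ℝ)) = v j • c := by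
  classical
  have hD : diracOp α ψ x₀ = 0 := by
    rw [heq x₀ hx₀, hzero]; simp
  have hno : ¬ ∃ (c : EuclideanSpace ℂ (Fin N)) (v : EuclideanSpace ℝ (Fin n)), c ≠ 0 ∧ v ≠ 0 ∧
      ∀ j : Fin n, fderiv ℝ ψ x₀ (EuclideanSpace.single j (1:ℝ)) = v j • c := by
    rintro ⟨c, v, hc, hv, hcv⟩
    refine hc (clifford_no_rank_one α hcl c v hv ?_)
    rw [← hD]
    exact (Finset.sum_congr rfl fun j _ => by rw [hcv j]).symm
  refine ⟨?_, hno⟩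
  -- the derivative is nonzero on some coordinate direction
  have hexj : ∃ j, fderiv ℝ ψ x₀ (EuclideanSpace.single j (1:ℝ)) ≠ 0 := by
    by_contra hall
    push_neg at hall
    apply hder
    apply ContinuousLinearMap.coe_injective
    apply Module.Basis.ext (EuclideanSpace.basisFun (Fin n) ℝ).toBasis
    intro j
    simpa [EuclideanSpace.basisFun_apply] using hall j
  by_contra hlt
  push_neg at hlt
  set Lm := ((fderiv ℝ ψ x₀) :
      EuclideanSpace ℝ (Fin n) →ₗ[ℝ] EuclideanSpace ℂ (Fin N)) with hLm
  have hle : Module.finrank ℝ (LinearMap.range Lm) ≤ 1 := by omega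
  obtain ⟨c₀, hc₀⟩ := finrank_le_one_iff.mp hle
  choose r hr using fun j =>
    hc₀ ⟨Lm (EuclideanSpace.single j (1:ℝ)), LinearMap.mem_range_self _ _⟩
  have hrc : ∀ j, fderiv ℝ ψ x₀ (EuclideanSpace.single j (1:ℝ))
      = r j • (c₀ : EuclideanSpace ℂ (Fin N)) := by
    intro j
    have := congrArg Subtype.val (hr j)
    simpa [hLm] using this.symm
  obtain ⟨j₀, hj₀⟩ := hexj
  apply hno
  refine ⟨(c₀ : EuclideanSpace ℂ (Fin N)), (WithLp.equiv 2 (Fin n → ℝ)).symm r, ?_, ?_, ?_⟩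
  · intro hc0
    exact hj₀ (by rw [hrc j₀, hc0, smul_zero])
  · intro hv0
    apply hj₀
    rw [hrc j₀]
    have : r j₀ = 0 := congrFun (congrArg (WithLp.equiv 2 (Fin n → ℝ)) hv0) j₀
    rw [this, zero_smul]
  · intro j
    exact hrc j
end
end

section
/- Let n ≥ 2, N = 2^⌊n/2⌋, and let α₁,…,αₙ be complex N×N matrices satisfying the Clifford relations. Fix λ > 0, x₀ ∈ ℝⁿ, and an arbitrary Φ ∈ ℂᴺ. Then the spinor ψ(x) = (2λ/(λ² + |x−x₀|²))^{n/2} (Id − γ((x−x₀)/λ)) Φ satisfies the pointwise identity Dψ(x) = (nλ/(λ² + |x−x₀|²)) ψ(x) for every x ∈ ℝⁿ. -/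
open MeasureTheory Metric Filter Matrix
open scoped ENNReal NNReal

noncomputable section

/-- Clifford multiplication `γ(v) = Σⱼ vⱼ αⱼ`. -/
def gammaMat {n N : ℕ} (α : Fin n → Matrix (Fin N) (Fin N) ℂ)
    (v : EuclideanSpace ℝ (Fin n)) : Matrix (Fin N) (Fin N) ℂ :=
  ∑ j : Fin n, (v j : ℂ) • α j

/-- The Dirac bubble `ψ(x) = (2λ/(λ²+|x-x₀|²))^{n/2} (Id - γ((x-x₀)/λ)) Φ₀`. -/
def diracBubble {n N : ℕ} (α : Fin n → Matrix (Fin N) (Fin N) ℂ)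
    (l : ℝ) (x₀ : EuclideanSpace ℝ (Fin n)) (Φ₀ : EuclideanSpace ℂ (Fin N))
    (x : EuclideanSpace ℝ (Fin n)) : EuclideanSpace ℂ (Fin N) :=
  ((2 * l / (l ^ 2 + ‖x - x₀‖ ^ 2)) ^ ((n:ℝ)/2)) •
    (Φ₀ - Matrix.toEuclideanLin (gammaMat α (l⁻¹ • (x - x₀))) Φ₀)

lemma clifford_sq {n N : ℕ} {α : Fin n → Matrix (Fin N) (Fin N) ℂ} (hcl : CliffordRel α)
    (j : Fin n) : α j * α j = -1 := by
  have h := hcl j j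
  rw [if_pos rfl, ← two_smul ℂ (α j * α j)] at h
  have h2 : (2:ℂ) • (α j * α j) = (2:ℂ) • (-1 : Matrix (Fin N) (Fin N) ℂ) := by
    rw [h]; module
  exact smul_right_injective _ (by norm_num : (2:ℂ) ≠ 0) h2

lemma clifford_sym_sum {n N : ℕ} {α : Fin n → Matrix (Fin N) (Fin N) ℂ} (hcl : CliffordRel α)
    (c : Fin n → ℝ) :
    ∑ j, ∑ k, ((c j * c k : ℝ) : ℂ) • (α j * α k)
      = ((-(∑ j, (c j)^2) : ℝ) : ℂ) • (1 : Matrix (Fin N) (Fin N) ℂ) := by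
  have swap : ∑ j, ∑ k, ((c j * c k : ℝ) : ℂ) • (α j * α k)
      = ∑ j, ∑ k, ((c j * c k : ℝ) : ℂ) • (α k * α j) := by
    rw [Finset.sum_comm]
    exact Finset.sum_congr rfl fun j _ => Finset.sum_congr rfl fun k _ => by
      rw [mul_comm (c k) (c j)]
  have key : (2:ℂ) • (∑ j, ∑ k, ((c j * c k : ℝ) : ℂ) • (α j * α k))
      = (2:ℂ) • ((((-(∑ j, (c j)^2)) : ℝ) : ℂ) • (1 : Matrix (Fin N) (Fin N) ℂ)) := by
    rw [two_smul]
    nth_rewrite 2 [swap]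
    rw [← Finset.sum_add_distrib]
    calc ∑ j, (∑ k, ((c j * c k : ℝ) : ℂ) • (α j * α k) + ∑ k, ((c j * c k : ℝ) : ℂ) • (α k * α j))
        = ∑ j, ∑ k, ((c j * c k : ℝ) : ℂ) • (α j * α k + α k * α j) := by
          refine Finset.sum_congr rfl fun j _ => ?_
          rw [← Finset.sum_add_distrib]
          exact Finset.sum_congr rfl fun k _ => (smul_add _ _ _).symm
      _ = ∑ j, ∑ k, ((c j * c k : ℝ) : ℂ) • ((-2:ℂ) • (if j = k then (1 : Matrix (Fin N) (Fin N) ℂ) else 0)) := by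
          refine Finset.sum_congr rfl fun j _ => Finset.sum_congr rfl fun k _ => ?_
          rw [hcl j k]
      _ = ∑ j, ((c j * c j : ℝ) : ℂ) • ((-2:ℂ) • (1 : Matrix (Fin N) (Fin N) ℂ)) := by
          refine Finset.sum_congr rfl fun j _ => ?_
          rw [Fintype.sum_eq_single j (fun k hk => by rw [if_neg fun h => hk h.symm]; simp)]
          rw [if_pos rfl]
      _ = (2:ℂ) • ((((-(∑ j, (c j)^2)) : ℝ) : ℂ) • (1 : Matrix (Fin N) (Fin N) ℂ)) := by
          simp only [smul_smul, ← Finset.sum_smul]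
          congr 1
          push_cast
          rw [← Finset.sum_neg_distrib, ← Finset.sum_mul]
          simp [neg_mul, mul_comm, sq]
  exact smul_right_injective _ (by norm_num : (2:ℂ) ≠ 0) key


set_option maxHeartbeats 2000000 in
/-- The Dirac bubble with arbitrary constant spinor `Φ` is a pointwise eigenspinor of the
Euclidean Dirac operator: `Dψ(x) = (nλ/(λ²+|x-x₀|²)) ψ(x)`. -/
theorem bubbles_are_pointwise_eigenspinors
    (n : ℕ) (hn : 2 ≤ n) (N : ℕ) (hN : N = 2 ^ (n / 2))
    (α : Fin n → Matrix (Fin N) (Fin N) ℂ)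
    (hcl : CliffordRel α)
    (l : ℝ) (hl : 0 < l) (x₀ : EuclideanSpace ℝ (Fin n))
    (Φ : EuclideanSpace ℂ (Fin N)) :
    ∀ x : EuclideanSpace ℝ (Fin n),
      diracOp α (diracBubble α l x₀ Φ) x =
        ((n * l) / (l ^ 2 + ‖x - x₀‖ ^ 2)) • diracBubble α l x₀ Φ x := by
  intro x
  classical
  have hlne : l ≠ 0 := ne_of_gt hl
  have hu : (0:ℝ) < l^2 + ‖x - x₀‖^2 := by positivity
  have hune : l^2 + ‖x - x₀‖^2 ≠ 0 := ne_of_gt hu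
  set p : ℝ := (n:ℝ)/2 with hp
  set B : Fin n → EuclideanSpace ℂ (Fin N) := fun k => Matrix.toEuclideanLin (α k) Φ with hB
  set a : ℝ := (2*l*(l^2 + ‖x - x₀‖^2)⁻¹) ^ p with hadef
  -- representation of the bubble
  have hrepr : diracBubble α l x₀ Φ = fun y =>
      ((2*l*(l^2+‖y - x₀‖^2)⁻¹) ^ p) • Φ
        - ∑ k, (((2*l*(l^2+‖y - x₀‖^2)⁻¹) ^ p) * ((y k - x₀ k) * l⁻¹)) • B k := by
    funext y
    rw [diracBubble, gammaMat, smul_sub, div_eq_mul_inv]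
    congr 1
    rw [map_sum, LinearMap.sum_apply, Finset.smul_sum]
    refine Finset.sum_congr rfl fun k _ => ?_
    rw [_root_.map_smul, LinearMap.smul_apply, Complex.coe_smul, smul_smul]
    congr 2
    simp [PiLp.smul_apply, PiLp.sub_apply, mul_comm]
  -- derivative chain
  have hsub : HasFDerivAt (fun y : EuclideanSpace ℝ (Fin n) => y - x₀)
      (ContinuousLinearMap.id ℝ (EuclideanSpace ℝ (Fin n))) x := (hasFDerivAt_id x).sub_const x₀
  have hq := hsub.norm_sq.const_add (l^2)
  have hinv := (hasFDerivAt_inv hune).comp x hq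
  have hw := hinv.const_mul (2*l)
  have hwx : (2*l*(l^2+‖x - x₀‖^2)⁻¹) ≠ 0 := by positivity
  have hfd0 := hw.rpow_const (p := p) (Or.inl hwx)
  set F : EuclideanSpace ℝ (Fin n) →L[ℝ] ℝ :=
    (p * (2*l*(l^2+‖x - x₀‖^2)⁻¹) ^ (p-1)) •
        ((2*l) • ((ContinuousLinearMap.smulRight (1 : ℝ →L[ℝ] ℝ) (-((l^2+‖x - x₀‖^2) ^ 2)⁻¹)).comp
          ((2:ℕ) • ((innerSL ℝ (x - x₀)).comp (ContinuousLinearMap.id ℝ (EuclideanSpace ℝ (Fin n))))))) with hF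
  have hfd : HasFDerivAt (fun y : EuclideanSpace ℝ (Fin n) => (2*l*(l^2+‖y - x₀‖^2)⁻¹) ^ p)
      F x := hfd0
  have hcoord : ∀ k : Fin n, HasFDerivAt (fun y : EuclideanSpace ℝ (Fin n) => (y k - x₀ k) * l⁻¹)
      ((l⁻¹ : ℝ) • (EuclideanSpace.proj k : EuclideanSpace ℝ (Fin n) →L[ℝ] ℝ)) x := fun k => by
    have h1 : HasFDerivAt (fun y : EuclideanSpace ℝ (Fin n) => y k)
        (EuclideanSpace.proj k : EuclideanSpace ℝ (Fin n) →L[ℝ] ℝ) x :=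
      (EuclideanSpace.proj (𝕜 := ℝ) k).hasFDerivAt
    exact (h1.sub_const (x₀ k)).mul_const l⁻¹
  have hψ : HasFDerivAt (fun y => ((2*l*(l^2+‖y - x₀‖^2)⁻¹) ^ p) • Φ
        - ∑ k, (((2*l*(l^2+‖y - x₀‖^2)⁻¹) ^ p) * ((y k - x₀ k) * l⁻¹)) • B k)
      (F.smulRight Φ - ∑ k, (a • ((l⁻¹ : ℝ) • (EuclideanSpace.proj k : EuclideanSpace ℝ (Fin n) →L[ℝ] ℝ))
          + ((x k - x₀ k) * l⁻¹) • F).smulRight (B k)) x :=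
    (hfd.smul_const Φ).sub
      (HasFDerivAt.fun_sum (fun (k : Fin n) (_ : k ∈ Finset.univ) => (hfd.mul (hcoord k)).smul_const (B k)))
  have hFval : ∀ j, F (EuclideanSpace.single j (1:ℝ))
      = -(n:ℝ) * (x j - x₀ j) * a / (l^2+‖x - x₀‖^2) := by
    intro j
    rw [hF]
    simp only [ContinuousLinearMap.smul_apply, ContinuousLinearMap.comp_apply,
      ContinuousLinearMap.coe_id', id_eq, ContinuousLinearMap.smulRight_apply,
      ContinuousLinearMap.one_apply, innerSL_apply_apply, smul_eq_mul]
    have hinner : (inner ℝ (x - x₀) (EuclideanSpace.single j (1:ℝ)) : ℝ) = x j - x₀ j := by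
      simp [PiLp.inner_apply, PiLp.sub_apply, EuclideanSpace.single_apply]
    rw [hinner, Real.rpow_sub_one hwx, ← hadef, hp, nsmul_eq_mul]
    have hu2 : (l ^ 2 + ‖x - x₀‖ ^ 2) ^ 2 ≠ 0 := pow_ne_zero _ hune
    field_simp
    ring
  simp only [diracOp]
  rw [hrepr, hψ.fderiv]
  simp only [ContinuousLinearMap.sub_apply, ContinuousLinearMap.smulRight_apply,
    ContinuousLinearMap.sum_apply, ContinuousLinearMap.add_apply, ContinuousLinearMap.smul_apply,
    PiLp.proj_apply, EuclideanSpace.single_apply, hFval, smul_eq_mul]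
  rw [← hadef]
  have hEsmul : ∀ (r : ℝ) (M : Matrix (Fin N) (Fin N) ℂ),
      r • (Matrix.toEuclideanLin M) Φ = (Matrix.toEuclideanLin ((r:ℂ) • M)) Φ := fun r M => by
    rw [_root_.map_smul, LinearMap.smul_apply, Complex.coe_smul]
  have hmulMat : ∀ j k : Fin n, (Matrix.toEuclideanLin (α j)) (B k)
      = (Matrix.toEuclideanLin (α j * α k)) Φ := fun j k => by
    rw [hB, Matrix.toEuclideanLin_eq_toLin,
      Matrix.toLin_mul (PiLp.basisFun 2 ℂ (Fin N)) (PiLp.basisFun 2 ℂ (Fin N)) (PiLp.basisFun 2 ℂ (Fin N)),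
      LinearMap.comp_apply]
  have key : ∀ (j : Fin n) (r : ℝ) (s : Fin n → ℝ),
      (Matrix.toEuclideanLin (α j)) (r • Φ - ∑ k, s k • B k)
        = (Matrix.toEuclideanLin ((r:ℂ) • α j - ∑ k, ((s k : ℝ):ℂ) • (α j * α k))) Φ := by
    intro j r s
    have hL : (Matrix.toEuclideanLin (α j)) (r • Φ - ∑ k, s k • B k)
        = r • (Matrix.toEuclideanLin (α j)) Φ - ∑ k, s k • (Matrix.toEuclideanLin (α j * α k)) Φ := by
      rw [map_sub, LinearMap.map_smul_of_tower, map_sum]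
      congr 1
      exact Finset.sum_congr rfl fun k _ => by rw [LinearMap.map_smul_of_tower, hmulMat j k]
    have hRr : (Matrix.toEuclideanLin ((r:ℂ) • α j - ∑ k, ((s k : ℝ):ℂ) • (α j * α k))) Φ
        = r • (Matrix.toEuclideanLin (α j)) Φ - ∑ k, s k • (Matrix.toEuclideanLin (α j * α k)) Φ := by
      rw [map_sub, LinearMap.sub_apply, _root_.map_smul, LinearMap.smul_apply, Complex.coe_smul,
        map_sum, LinearMap.sum_apply]
      congr 1
      exact Finset.sum_congr rfl fun k _ => by
        rw [_root_.map_smul, LinearMap.smul_apply, Complex.coe_smul]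
    rw [hL, hRr]
  have hone : Φ = (Matrix.toEuclideanLin (1 : Matrix (Fin N) (Fin N) ℂ)) Φ := by
    rw [Matrix.toEuclideanLin_eq_toLin, Matrix.toLin_one]; rfl
  have hR : ((n:ℝ) * l / (l ^ 2 + ‖x - x₀‖ ^ 2)) • (a • Φ - ∑ k, (a * ((x k - x₀ k) * l⁻¹)) • B k)
      = (Matrix.toEuclideanLin ((((n:ℝ) * l / (l ^ 2 + ‖x - x₀‖ ^ 2) : ℝ):ℂ) •
          (((a : ℝ):ℂ) • 1 - ∑ k, ((a * ((x k - x₀ k) * l⁻¹) : ℝ):ℂ) • α k))) Φ := by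
    rw [← hEsmul]
    congr 1
    rw [map_sub, LinearMap.sub_apply, ← hEsmul, ← hone]
    congr 1
    rw [map_sum, LinearMap.sum_apply]
    exact Finset.sum_congr rfl fun k _ => by rw [← hEsmul]
  rw [hR]
  have hstep1 : ∀ j : Fin n, (Matrix.toEuclideanLin (α j))
        ((-(n:ℝ) * (x j - x₀ j) * a / (l ^ 2 + ‖x - x₀‖ ^ 2)) • Φ -
          ∑ k, (a * (l⁻¹ * if k = j then 1 else 0) +
              (x k - x₀ k) * l⁻¹ * (-(n:ℝ) * (x j - x₀ j) * a / (l ^ 2 + ‖x - x₀‖ ^ 2))) • B k)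
      = (Matrix.toEuclideanLin
          (((-(n:ℝ) * (x j - x₀ j) * a / (l ^ 2 + ‖x - x₀‖ ^ 2) : ℝ):ℂ) • α j -
            ∑ k, ((a * (l⁻¹ * if k = j then 1 else 0) +
              (x k - x₀ k) * l⁻¹ * (-(n:ℝ) * (x j - x₀ j) * a / (l ^ 2 + ‖x - x₀‖ ^ 2)) : ℝ):ℂ) • (α j * α k))) Φ :=
    fun j => key j _ _
  rw [Finset.sum_congr rfl fun j _ => hstep1 j, ← LinearMap.sum_apply, ← map_sum]
  refine congrArg (fun M => (Matrix.toEuclideanLin M) Φ) ?_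
  have hnormsum : ∑ j : Fin n, (x j - x₀ j)^2 = ‖x - x₀‖^2 := by
    rw [← real_inner_self_eq_norm_sq]
    simp [PiLp.inner_apply, PiLp.sub_apply, sq]
    rw [← sq, EuclideanSpace.real_norm_sq_eq]; simp [sq]
  rw [Finset.sum_sub_distrib]
  simp only [Complex.ofReal_add, add_smul, Finset.sum_add_distrib]
  have hT2a : ∑ j : Fin n, ∑ k : Fin n,
        ((a * (l⁻¹ * if k = j then 1 else 0) : ℝ):ℂ) • (α j * α k)
      = ((n:ℂ) * ((a * l⁻¹ : ℝ):ℂ)) • (-1 : Matrix (Fin N) (Fin N) ℂ) := by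
    have h1 : ∀ j : Fin n, ∑ k : Fin n, ((a * (l⁻¹ * if k = j then 1 else 0) : ℝ):ℂ) • (α j * α k)
        = ((a * l⁻¹ : ℝ):ℂ) • (-1 : Matrix (Fin N) (Fin N) ℂ) := fun j => by
      rw [Fintype.sum_eq_single j (fun k hk => by rw [if_neg hk]; simp)]
      rw [if_pos rfl, clifford_sq hcl j, mul_one]
    rw [Finset.sum_congr rfl fun j _ => h1 j, Finset.sum_const, Finset.card_univ,
      Fintype.card_fin, ← Nat.cast_smul_eq_nsmul ℂ, smul_smul]
  have hT2b : ∑ j : Fin n, ∑ k : Fin n,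
        (((x k - x₀ k) * l⁻¹ * (-(n:ℝ) * (x j - x₀ j) * a / (l ^ 2 + ‖x - x₀‖ ^ 2)) : ℝ):ℂ) • (α j * α k)
      = ((-(n:ℝ) * a / ((l ^ 2 + ‖x - x₀‖ ^ 2) * l) : ℝ):ℂ) • ((-‖x - x₀‖^2 : ℝ):ℂ) • (1 : Matrix (Fin N) (Fin N) ℂ) := by
    have h2 : ∀ j k : Fin n,
        (((x k - x₀ k) * l⁻¹ * (-(n:ℝ) * (x j - x₀ j) * a / (l ^ 2 + ‖x - x₀‖ ^ 2)) : ℝ):ℂ) • (α j * α k)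
          = ((-(n:ℝ) * a / ((l ^ 2 + ‖x - x₀‖ ^ 2) * l) : ℝ):ℂ) •
              (((x j - x₀ j) * (x k - x₀ k) : ℝ):ℂ) • (α j * α k) := fun j k => by
      rw [smul_smul, ← Complex.ofReal_mul]
      congr 2
      field_simp
    rw [Finset.sum_congr rfl fun j _ => Finset.sum_congr rfl fun k _ => h2 j k]
    rw [show ∑ j : Fin n, ∑ k : Fin n, ((-(n:ℝ) * a / ((l ^ 2 + ‖x - x₀‖ ^ 2) * l) : ℝ):ℂ) •
          (((x j - x₀ j) * (x k - x₀ k) : ℝ):ℂ) • (α j * α k)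
        = ((-(n:ℝ) * a / ((l ^ 2 + ‖x - x₀‖ ^ 2) * l) : ℝ):ℂ) •
          ∑ j : Fin n, ∑ k : Fin n, (((x j - x₀ j) * (x k - x₀ k) : ℝ):ℂ) • (α j * α k) from by
      rw [Finset.smul_sum]
      exact Finset.sum_congr rfl fun j _ => (Finset.smul_sum).symm]
    rw [clifford_sym_sum hcl (fun j => x j - x₀ j)]
    congr 2
    rw [hnormsum]
  rw [hT2a, hT2b]
  have hcu : ((l:ℂ))^2 + ((‖x - x₀‖:ℝ):ℂ)^2 ≠ 0 := by
    rw [← Complex.ofReal_pow, ← Complex.ofReal_pow, ← Complex.ofReal_add]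
    exact Complex.ofReal_ne_zero.mpr hune
  have hcl0 : (l:ℂ) ≠ 0 := Complex.ofReal_ne_zero.mpr hlne
  have hG : ∀ j : Fin n, ((-(n:ℝ) * (x j - x₀ j) * a / (l ^ 2 + ‖x - x₀‖ ^ 2) : ℝ):ℂ) • α j
      = -((((n:ℝ) * l / (l ^ 2 + ‖x - x₀‖ ^ 2) : ℝ):ℂ) • ((a * ((x j - x₀ j) * l⁻¹) : ℝ):ℂ) • α j) := fun j => by
    rw [smul_smul, ← neg_smul]
    congr 1
    rw [← Complex.ofReal_mul, ← Complex.ofReal_neg]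
    congr 1
    field_simp
  have h1 : ((n:ℂ) * ((a * l⁻¹ : ℝ):ℂ)) • (-1 : Matrix (Fin N) (Fin N) ℂ)
      + ((-(n:ℝ) * a / ((l ^ 2 + ‖x - x₀‖ ^ 2) * l) : ℝ):ℂ) • ((-‖x - x₀‖^2 : ℝ):ℂ) • (1 : Matrix (Fin N) (Fin N) ℂ)
      = -((((n:ℝ) * l / (l ^ 2 + ‖x - x₀‖ ^ 2) : ℝ):ℂ) • (((a:ℝ):ℂ) • (1 : Matrix (Fin N) (Fin N) ℂ))) := by
    rw [smul_neg, smul_smul, smul_smul,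
      ← neg_smul ((n:ℂ) * ((a * l⁻¹ : ℝ):ℂ)) (1 : Matrix (Fin N) (Fin N) ℂ),
      ← neg_smul (((((n:ℝ) * l / (l ^ 2 + ‖x - x₀‖ ^ 2) : ℝ):ℂ)) * ((a:ℝ):ℂ)) (1 : Matrix (Fin N) (Fin N) ℂ),
      ← add_smul]
    congr 1
    push_cast
    field_simp
    ring
  rw [smul_sub, Finset.smul_sum, h1, Finset.sum_congr rfl fun j _ => hG j, sub_neg_eq_add,
    Finset.sum_neg_distrib]
  abel
end
end
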